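/- Let T be the Grothendieck site whose objects are the open intervals X_n = ((3^n−1)/(2·3^n), (3^n+1)/(2·3^n)), U_n = ((3^n−1)/(2·3^n), (3^{n+1}+1)/(2·3^{n+1})), and V_n = ((3^{n+1}−1)/(2·3^{n+1}), (3^n+1)/(2·3^n)) of (0,1), with morphisms the inclusions and covers the jointly surjective families. Then every covering family of U_n contains the identity of U_n, and every covering family of V_n contains the identity of V_n; consequently the representable sheaves h_{U_n} and h_{V_n} are weakly contractible (projective) objects of Shv(T), and every object Z of T admits a cover by U_n ⊔ V_n for some n, so Shv(T) is locally weakly contractible. -/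

import Mathlib

open CategoryTheory Limits Opposite Set

/-- The interval `X_n = ((3^n−1)/(2·3^n), (3^n+1)/(2·3^n))`. -/
def Xset (n : ℕ) : Set ℝ := Ioo ((3 ^ n - 1) / (2 * 3 ^ n)) ((3 ^ n + 1) / (2 * 3 ^ n))

/-- The interval `U_n = ((3^n−1)/(2·3^n), (3^{n+1}+1)/(2·3^{n+1}))`. -/
def Uset (n : ℕ) : Set ℝ :=
  Ioo ((3 ^ n - 1) / (2 * 3 ^ n)) ((3 ^ (n + 1) + 1) / (2 * 3 ^ (n + 1)))

/-- The interval `V_n = ((3^{n+1}−1)/(2·3^{n+1}), (3^n+1)/(2·3^n))`. -/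
def Vset (n : ℕ) : Set ℝ :=
  Ioo ((3 ^ (n + 1) - 1) / (2 * 3 ^ (n + 1))) ((3 ^ n + 1) / (2 * 3 ^ n))

/-- The underlying poset of the site of Dugger–Hollander–Isaksen: the subsets
`X_n`, `U_n`, `V_n` of `(0,1)`, ordered by inclusion. -/
def DHI : Type := {S : Set ℝ // ∃ n : ℕ, S = Xset n ∨ S = Uset n ∨ S = Vset n}

instance : PartialOrder DHI := Subtype.partialOrder _

instance : SmallCategory DHI := Preorder.smallCategory DHI

/-- `h^♯`: Yoneda followed by sheafification. -/
noncomputable def hSharp (J : GrothendieckTopology DHI) : DHI ⥤ Sheaf J (Type 0) :=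
  yoneda ⋙ presheafToSheaf J (Type 0)

/-- An object `Y` of a topos is weakly contractible if every epimorphism onto `Y`
splits. -/
def WeaklyContractible {D : Type*} [Category D] (Y : D) : Prop :=
  ∀ (G : D) (φ : G ⟶ Y), Epi φ → ∃ s : Y ⟶ G, s ≫ φ = 𝟙 Y

/-!
Every object of the site is an interval `(1/2 - 3⁻ᵃ/2, 1/2 + 3⁻ᵇ/2)` with `|a - b| ≤ 1`, and
inclusion of such intervals compares the indices. The left endpoint of `V_n` is a point of `U_n`
lying in no proper subobject of `U_n`, so a jointly surjective sieve on `U_n` contains the identity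
(symmetrically for `V_n`). An epimorphism of sheaves is locally surjective, hence surjective on
sections over such an object, so the canonical section of `h_{U_n}` lifts and the epimorphism
splits. Finally `X_n = U_n ∪ V_n`.
-/

universe u

noncomputable def halfWidth (n : ℕ) : ℝ := (3 ^ n)⁻¹ / 2

lemma halfWidth_pos (n : ℕ) : 0 < halfWidth n := by
  unfold halfWidth
  positivity

lemma halfWidth_strictAnti : StrictAnti halfWidth := fun m n h => by
  unfold halfWidth
  gcongr
  norm_num

noncomputable def dhiIoo (a b : ℕ) : Set ℝ := Ioo (1 / 2 - halfWidth a) (1 / 2 + halfWidth b)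

lemma Xset_eq_dhiIoo (n : ℕ) : Xset n = dhiIoo n n := by
  unfold Xset dhiIoo halfWidth
  congr 1 <;> field_simp

lemma Uset_eq_dhiIoo (n : ℕ) : Uset n = dhiIoo n (n + 1) := by
  unfold Uset dhiIoo halfWidth
  congr 1 <;> field_simp

lemma Vset_eq_dhiIoo (n : ℕ) : Vset n = dhiIoo (n + 1) n := by
  unfold Vset dhiIoo halfWidth
  congr 1 <;> field_simp

lemma dhiIoo_subset_dhiIoo_iff {a b c d : ℕ} : dhiIoo a b ⊆ dhiIoo c d ↔ c ≤ a ∧ d ≤ b := by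
  rw [dhiIoo, dhiIoo, Ioo_subset_Ioo_iff (by linarith [halfWidth_pos a, halfWidth_pos b]),
    sub_le_sub_iff_left, add_le_add_iff_left, halfWidth_strictAnti.le_iff_ge,
    halfWidth_strictAnti.le_iff_ge]

lemma sub_halfWidth_mem_dhiIoo_iff {a b k : ℕ} : 1 / 2 - halfWidth k ∈ dhiIoo a b ↔ a < k := by
  rw [dhiIoo, mem_Ioo, sub_lt_sub_iff_left, halfWidth_strictAnti.lt_iff_gt]
  exact ⟨And.left, fun h => ⟨h, by linarith [halfWidth_pos k, halfWidth_pos b]⟩⟩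

lemma add_halfWidth_mem_dhiIoo_iff {a b k : ℕ} : 1 / 2 + halfWidth k ∈ dhiIoo a b ↔ b < k := by
  rw [dhiIoo, mem_Ioo, add_lt_add_iff_left, halfWidth_strictAnti.lt_iff_gt]
  exact ⟨And.right, fun h => ⟨by linarith [halfWidth_pos k, halfWidth_pos a], h⟩⟩

lemma Xset_eq_union (n : ℕ) : Xset n = Uset n ∪ Vset n := by
  have := halfWidth_strictAnti.antitone (Nat.le_succ n)
  rw [Xset_eq_dhiIoo, Uset_eq_dhiIoo, Vset_eq_dhiIoo, dhiIoo, dhiIoo, dhiIoo, Ioo_union_Ioo',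
    min_eq_left (by linarith), max_eq_right (by linarith)]
  all_goals linarith [halfWidth_pos n, halfWidth_pos (n + 1)]

namespace DHI

lemma exists_eq_dhiIoo (d : DHI) : ∃ a b : ℕ, d.1 = dhiIoo a b ∧ b ≤ a + 1 ∧ a ≤ b + 1 := by
  obtain ⟨n, h | h | h⟩ := d.2
  · exact ⟨n, n, h.trans (Xset_eq_dhiIoo n), by omega, by omega⟩
  · exact ⟨n, n + 1, h.trans (Uset_eq_dhiIoo n), by omega, by omega⟩
  · exact ⟨n + 1, n, h.trans (Vset_eq_dhiIoo n), by omega, by omega⟩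

lemma eq_of_le_of_sub_halfWidth_mem {n : ℕ} {U d : DHI} (hU : U.1 = Uset n) (hd : d ≤ U)
    (hx : 1 / 2 - halfWidth (n + 1) ∈ d.1) : d = U := by
  obtain ⟨a, b, hd_eq, hb, -⟩ := d.exists_eq_dhiIoo
  change d.1 ⊆ U.1 at hd
  rw [hU, Uset_eq_dhiIoo, hd_eq, dhiIoo_subset_dhiIoo_iff] at hd
  rw [hd_eq, sub_halfWidth_mem_dhiIoo_iff] at hx
  obtain ⟨rfl, rfl⟩ : a = n ∧ b = n + 1 := by omega
  exact Subtype.ext (hd_eq.trans ((Uset_eq_dhiIoo a).symm.trans hU.symm))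

lemma eq_of_le_of_add_halfWidth_mem {n : ℕ} {V d : DHI} (hV : V.1 = Vset n) (hd : d ≤ V)
    (hx : 1 / 2 + halfWidth (n + 1) ∈ d.1) : d = V := by
  obtain ⟨a, b, hd_eq, -, ha⟩ := d.exists_eq_dhiIoo
  change d.1 ⊆ V.1 at hd
  rw [hV, Vset_eq_dhiIoo, hd_eq, dhiIoo_subset_dhiIoo_iff] at hd
  rw [hd_eq, add_halfWidth_mem_dhiIoo_iff] at hx
  obtain ⟨rfl, rfl⟩ : a = n + 1 ∧ b = n := by omega
  exact Subtype.ext (hd_eq.trans ((Vset_eq_dhiIoo b).symm.trans hV.symm))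

lemma exists_forall_mem_Uset_or_Vset (Z : DHI) :
    ∃ m : ℕ, ∀ x ∈ Z.1, ∃ d ≤ Z, (d.1 = Uset m ∨ d.1 = Vset m) ∧ x ∈ d.1 := by
  obtain ⟨m, hZ | hZ | hZ⟩ := Z.2
  · refine ⟨m, fun x hx => ?_⟩
    have hUVZ : Uset m ∪ Vset m ⊆ Z.1 := by rw [hZ, Xset_eq_union]
    rw [hZ, Xset_eq_union] at hx
    rcases hx with hx | hx
    · exact ⟨⟨Uset m, m, Or.inr (Or.inl rfl)⟩, (union_subset_iff.mp hUVZ).1, Or.inl rfl, hx⟩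
    · exact ⟨⟨Vset m, m, Or.inr (Or.inr rfl)⟩, (union_subset_iff.mp hUVZ).2, Or.inr rfl, hx⟩
  · exact ⟨m, fun x hx => ⟨Z, le_rfl, Or.inl hZ, hx⟩⟩
  · exact ⟨m, fun x hx => ⟨Z, le_rfl, Or.inr hZ, hx⟩⟩

end DHI

def IsJointlySurjectiveTopology (J : GrothendieckTopology DHI) : Prop :=
  ∀ (c : DHI) (S : Sieve c), S ∈ J c ↔ ∀ x ∈ c.1, ∃ (d : DHI) (f : d ⟶ c), S.arrows f ∧ x ∈ d.1

section JointlySurjective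

variable {J : GrothendieckTopology DHI} (hJ : IsJointlySurjectiveTopology J)
include hJ

lemma id_mem_of_forall_le_of_mem {c : DHI} {x : ℝ} (hx : x ∈ c.1)
    (hc : ∀ d ≤ c, x ∈ d.1 → d = c) {S : Sieve c} (hS : S ∈ J c) : S.arrows (𝟙 c) := by
  obtain ⟨d, f, hf, hxd⟩ := (hJ c S).mp hS x hx
  obtain rfl := hc d (leOfHom f) hxd
  rwa [Subsingleton.elim f (𝟙 d)] at hf

lemma id_mem_of_eq_Uset {n : ℕ} {U : DHI} (hU : U.1 = Uset n) :
    ∀ S : Sieve U, S ∈ J U → S.arrows (𝟙 U) := fun _ =>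
  id_mem_of_forall_le_of_mem hJ
    (by rw [hU, Uset_eq_dhiIoo, sub_halfWidth_mem_dhiIoo_iff]; omega)
    (fun _ => DHI.eq_of_le_of_sub_halfWidth_mem hU)

lemma id_mem_of_eq_Vset {n : ℕ} {V : DHI} (hV : V.1 = Vset n) :
    ∀ S : Sieve V, S ∈ J V → S.arrows (𝟙 V) := fun _ =>
  id_mem_of_forall_le_of_mem hJ
    (by rw [hV, Vset_eq_dhiIoo, add_halfWidth_mem_dhiIoo_iff]; omega)
    (fun _ => DHI.eq_of_le_of_add_halfWidth_mem hV)

lemma generate_mem_of_forall_mem {Z : DHI} {P : DHI → Prop}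
    (hZ : ∀ x ∈ Z.1, ∃ d ≤ Z, P d ∧ x ∈ d.1) :
    Sieve.generate (fun d (_ : d ⟶ Z) => P d) ∈ J Z := by
  refine (hJ Z _).mpr fun x hx => ?_
  obtain ⟨d, hle, hd, hxd⟩ := hZ x hx
  exact ⟨d, homOfLE hle, Sieve.le_generate _ d (homOfLE hle) hd, hxd⟩

end JointlySurjective

lemma weaklyContractible_sheafify_yoneda {C : Type u} [SmallCategory C]
    (J : GrothendieckTopology C) (U : C) (hU : ∀ S : Sieve U, S ∈ J U → S.arrows (𝟙 U)) :
    WeaklyContractible ((presheafToSheaf J (Type u)).obj (yoneda.obj U)) := by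
  intro G φ hφ
  have : Presheaf.IsLocallySurjective J φ.hom := (Sheaf.isLocallySurjective_iff_epi φ).mpr hφ
  obtain ⟨t, ht⟩ := hU _
    (Presheaf.imageSieve_mem J φ.hom ((toSheafify J (yoneda.obj U)).app (op U) (𝟙 U)))
  simp only [op_id, Functor.map_id_apply] at ht
  refine ⟨⟨sheafifyLift J (yonedaEquiv.symm t) G.property⟩, Sheaf.hom_ext ?_⟩
  change sheafifyLift J (yonedaEquiv.symm t) G.property ≫ φ.hom = 𝟙 _
  refine sheafify_hom_ext J _ _ ((presheafToSheaf J _).obj (yoneda.obj U)).property ?_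
  rw [toSheafify_sheafifyLift_assoc, Category.comp_id]
  exact yonedaEquiv.injective (by rw [yonedaEquiv_comp, Equiv.apply_symm_apply]; exact ht)

/-- On the Dugger–Hollander–Isaksen site (with covers the jointly surjective
families): every covering sieve of `U_n` (resp. `V_n`) contains the identity; the
representable sheaves `h_{U_n}`, `h_{V_n}` are weakly contractible; and every object
admits a cover by `U_n` and `V_n` for some `n`.  Hence `Shv(T)` is locally weakly
contractible. -/
theorem stmt_15 (J : GrothendieckTopology DHI)
    (hJ : ∀ (c : DHI) (S : Sieve c),
      S ∈ J c ↔ ∀ x ∈ c.1, ∃ (d : DHI) (f : d ⟶ c), S.arrows f ∧ x ∈ d.1)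
    (n : ℕ) (U V : DHI) (hU : U.1 = Uset n) (hV : V.1 = Vset n) :
    (∀ S : Sieve U, S ∈ J U → S.arrows (𝟙 U)) ∧
    (∀ S : Sieve V, S ∈ J V → S.arrows (𝟙 V)) ∧
    WeaklyContractible ((hSharp J).obj U) ∧
    WeaklyContractible ((hSharp J).obj V) ∧
    (∀ Z : DHI, ∃ m : ℕ,
      Sieve.generate (fun d (_ : d ⟶ Z) => d.1 = Uset m ∨ d.1 = Vset m) ∈ J Z) := by
  refine ⟨id_mem_of_eq_Uset hJ hU, id_mem_of_eq_Vset hJ hV,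
    weaklyContractible_sheafify_yoneda J U (id_mem_of_eq_Uset hJ hU),
    weaklyContractible_sheafify_yoneda J V (id_mem_of_eq_Vset hJ hV), fun Z => ?_⟩
  obtain ⟨m, hm⟩ := Z.exists_forall_mem_Uset_or_Vset
  exact ⟨m, generate_mem_of_forall_mem hJ hm⟩
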